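/- Let m ≡ 2 (mod 3) be a positive odd integer and take c = 1 ∈ F_{2^m}. Then f(x) = (x^{2^m} + x + δ)^{2^{2m-1} + 2^{m-1}} + x is a permutation polynomial of F_{2^{3m}} for every δ ∈ F_{2^{3m}}. -/

import Mathlib

/-!
Write `q = 2 ^ m` and `σ x = x ^ q`, so that `σ³ = id` on `F = 𝔽_{q³}`, and put `y = σ x + x + δ`
and `d = Tr δ`, the trace to `𝔽_q`, which is also `Tr y`. Applying the additive map `σ + id` to
`f x = y ^ e + x` gives `σ (y ^ e) + y ^ e + y`, and since `2 e = q² + q` its square is the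
`𝔽₂`-linear expression `Q y = (σ y)² + d σ y + d y`. So `f x₁ = f x₂` forces `Q w = 0` for
`w = y₁ + y₂`, an element of trace zero. If such a `w` were nonzero, `t = w / d` would be a root of
`t³ + t + 1` with `σ t = t²`; but `t ∈ 𝔽₈`, where `σ` acts as `t ↦ t⁴` because `2 ^ m ≡ 4 (mod 7)`
when `m ≡ 2 (mod 3)`.
-/

open Function

lemma two_pow_mod_seven_of_mod_three_eq_two {m : ℕ} (hm : m % 3 = 2) : 2 ^ m % 7 = 4 := by
  obtain ⟨k, rfl⟩ : ∃ k, m = 3 * k + 2 := ⟨m / 3, by omega⟩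
  rw [pow_add, pow_mul, Nat.mul_mod, Nat.pow_mod]
  norm_num

section CharTwo

variable {F : Type*} [Field F] [CharP F 2] {m : ℕ}

lemma pow_seven_eq_one_of_cubic {t : F} (ht : t ^ 3 + t + 1 = 0) : t ^ 7 = 1 := by
  linear_combination (norm := ring_nf) (t ^ 4 + t ^ 2 + t + 1) * ht
  simp [CharTwo.two_eq_zero]

lemma pow_two_pow_ne_sq_of_cubic (hm : m % 3 = 2) {t : F} (ht : t ^ 3 + t + 1 = 0) :
    t ^ 2 ^ m ≠ t ^ 2 := by
  intro h
  have h4 : t ^ 2 ^ m = t ^ 4 := by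
    rw [← Nat.div_add_mod (2 ^ m) 7, two_pow_mod_seven_of_mod_three_eq_two hm, pow_add, pow_mul,
      pow_seven_eq_one_of_cubic ht, one_pow, one_mul]
  have ht0 : t ≠ 0 := by rintro rfl; simp at ht
  have hsq : t ^ 2 = 1 := by
    have : t ^ 2 * (t ^ 2 - 1) = 0 := by linear_combination h4.symm.trans h
    simpa [ht0, sub_eq_zero] using this
  have : (1 : F) = 0 := by
    linear_combination (norm := ring_nf) ht - t * hsq
    simp [CharTwo.two_eq_zero]
  exact one_ne_zero this

-- For `F = 𝔽_{2^{3m}}` this is the trace to `𝔽_{2^m}`.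
def frobTrace (m : ℕ) (x : F) : F := (x ^ 2 ^ m) ^ 2 ^ m + x ^ 2 ^ m + x

lemma frobTrace_add (x y : F) : frobTrace m (x + y) = frobTrace m x + frobTrace m y := by
  simp only [frobTrace, add_pow_char_pow]
  ring

lemma pow_two_pow_two_pow_eq_of_frobTrace {d y : F} (hy : frobTrace m y = d) :
    (y ^ 2 ^ m) ^ 2 ^ m = y ^ 2 ^ m + y + d := by
  rw [← hy, frobTrace]
  linear_combination (norm := ring_nf)
  simp [CharTwo.two_eq_zero]

lemma eq_zero_of_frobTrace_eq_zero_of_quadratic (hm : m % 3 = 2) {d w : F} (hd : d ^ 2 ^ m = d)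
    (hw : frobTrace m w = 0) (hQ : (w ^ 2 ^ m) ^ 2 + d * w ^ 2 ^ m + d * w = 0) : w = 0 := by
  have hQσ : (w ^ 2 ^ m + w) ^ 2 + d * (w ^ 2 ^ m + w) + d * w ^ 2 ^ m = 0 := by
    have := congrArg (· ^ 2 ^ m) hQ
    simp only [add_pow_char_pow, mul_pow, pow_right_comm _ 2 (2 ^ m), hd,
      pow_two_pow_two_pow_eq_of_frobTrace hw, add_zero] at this
    rwa [zero_pow (by positivity)] at this
  have hdw : d * w ^ 2 ^ m = w ^ 2 := by
    linear_combination (norm := ring_nf) hQ - hQσ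
    simp [CharTwo.two_eq_zero]
  by_contra hw0
  have hd0 : d ≠ 0 := by
    rintro rfl
    exact hw0 (pow_eq_zero_iff two_ne_zero |>.mp (by simpa using hdw.symm))
  set t := w / d
  have hwt : w = t * d := (div_mul_cancel₀ w hd0).symm
  have hwσ : w ^ 2 ^ m = t ^ 2 * d := mul_left_cancel₀ hd0 (by rw [hdw, hwt]; ring)
  have htσ : t ^ 2 ^ m = t ^ 2 := by
    refine mul_right_cancel₀ hd0 ?_
    rw [← hwσ, hwt, mul_pow, hd]
  have ht : t ^ 3 + t + 1 = 0 := by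
    have : d ^ 2 * t * (t ^ 3 + t + 1) = 0 := by
      rw [hwσ, hwt] at hQ
      linear_combination hQ
    exact (mul_eq_zero.mp this).resolve_left (mul_ne_zero (pow_ne_zero 2 hd0) (div_ne_zero hw0 hd0))
  exact pow_two_pow_ne_sq_of_cubic hm ht htσ

variable (hcube : ∀ x : F, ((x ^ 2 ^ m) ^ 2 ^ m) ^ 2 ^ m = x)
include hcube

lemma frobTrace_pow_two_pow (x : F) : frobTrace m x ^ 2 ^ m = frobTrace m x := by
  simp only [frobTrace, add_pow_char_pow, hcube]
  ring

lemma frobTrace_pow_two_pow_add_self_add (x δ : F) :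
    frobTrace m (x ^ 2 ^ m + x + δ) = frobTrace m δ := by
  simp only [frobTrace, add_pow_char_pow, hcube]
  linear_combination (norm := ring_nf)
  simp [CharTwo.two_eq_zero]

lemma sq_pow_two_pow_add_pow_add_self {e : ℕ} (he : 2 * e = 2 ^ m * 2 ^ m + 2 ^ m) {d y : F}
    (hy : frobTrace m y = d) :
    ((y ^ e) ^ 2 ^ m + y ^ e + y) ^ 2 = (y ^ 2 ^ m) ^ 2 + d * y ^ 2 ^ m + d * y := by
  have hsq : (y ^ e) ^ 2 = (y ^ 2 ^ m) ^ 2 ^ m * y ^ 2 ^ m := by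
    rw [← pow_mul, mul_comm, he, pow_add, pow_mul]
  have hsqσ : ((y ^ e) ^ 2 ^ m) ^ 2 = y * (y ^ 2 ^ m) ^ 2 ^ m := by
    rw [pow_right_comm, hsq, mul_pow, hcube, mul_comm]
  rw [CharTwo.add_sq, CharTwo.add_sq, hsq, hsqσ, pow_two_pow_two_pow_eq_of_frobTrace hy]
  linear_combination (norm := ring_nf)
  simp [CharTwo.two_eq_zero]

theorem injective_artinSchreier_pow_add (hm : m % 3 = 2) {e : ℕ}
    (he : 2 * e = 2 ^ m * 2 ^ m + 2 ^ m) (δ : F) :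
    Injective (fun x : F => (x ^ 2 ^ m + x + δ) ^ e + x) := by
  intro x₁ x₂ h
  simp only at h
  have hy₁ := frobTrace_pow_two_pow_add_self_add hcube x₁ δ
  have hy₂ := frobTrace_pow_two_pow_add_self_add hcube x₂ δ
  set y₁ := x₁ ^ 2 ^ m + x₁ + δ with hy₁_def
  set y₂ := x₂ ^ 2 ^ m + x₂ + δ with hy₂_def
  set d := frobTrace m δ
  have hg : (y₁ ^ e) ^ 2 ^ m + y₁ ^ e + y₁ = (y₂ ^ e) ^ 2 ^ m + y₂ ^ e + y₂ := by
    have hσ := congrArg (· ^ 2 ^ m) h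
    simp only [add_pow_char_pow] at hσ
    linear_combination hσ + h + hy₁_def - hy₂_def
  have hw : frobTrace m (y₁ + y₂) = 0 := by
    rw [frobTrace_add, hy₁, hy₂, CharTwo.add_self_eq_zero]
  have hQ : ((y₁ + y₂) ^ 2 ^ m) ^ 2 + d * (y₁ + y₂) ^ 2 ^ m + d * (y₁ + y₂) = 0 := by
    have hg2 := congrArg (· ^ 2) hg
    simp only [sq_pow_two_pow_add_pow_add_self hcube he hy₁,
      sq_pow_two_pow_add_pow_add_self hcube he hy₂] at hg2
    rw [add_pow_char_pow]
    linear_combination (norm := ring_nf) hg2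
    simp [CharTwo.two_eq_zero]
  have hy : y₁ = y₂ := CharTwo.add_eq_zero.mp
    (eq_zero_of_frobTrace_eq_zero_of_quadratic hm (frobTrace_pow_two_pow hcube δ) hw hQ)
  rw [hy] at h
  exact add_left_cancel h

end CharTwo

theorem stmt_16_general (m : ℕ) (hm3 : m % 3 = 2)
    (F : Type*) [Field F] [Fintype F] (hF : Fintype.card F = 2 ^ (3 * m))
    (δ : F) :
    Function.Bijective
      (fun x : F => (x ^ (2 ^ m) + x + δ) ^ (2 ^ (2 * m - 1) + 2 ^ (m - 1)) + x) := by
  have : CharP F 2 := charP_of_card_eq_prime_pow hF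
  have hcube (x : F) : ((x ^ 2 ^ m) ^ 2 ^ m) ^ 2 ^ m = x := by
    have hq : 2 ^ m * (2 ^ m * 2 ^ m) = Fintype.card F := by rw [hF]; ring
    rw [← pow_mul, ← pow_mul, hq]
    exact FiniteField.pow_card x
  have he : 2 * (2 ^ (2 * m - 1) + 2 ^ (m - 1)) = 2 ^ m * 2 ^ m + 2 ^ m := by
    obtain ⟨k, rfl⟩ : ∃ k, m = k + 1 := ⟨m - 1, by omega⟩
    rw [show 2 * (k + 1) - 1 = 2 * k + 1 by omega, Nat.add_sub_cancel]
    ring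
  exact Finite.injective_iff_bijective.mp (injective_artinSchreier_pow_add hcube hm3 he δ)

theorem stmt_16 (m : ℕ) (hm : 0 < m) (hodd : Odd m) (hm3 : m % 3 = 2)
    (F : Type*) [Field F] [Fintype F] (hF : Fintype.card F = 2 ^ (3 * m))
    (δ : F) :
    Function.Bijective
      (fun x : F => (x ^ (2 ^ m) + x + δ) ^ (2 ^ (2 * m - 1) + 2 ^ (m - 1)) + x) :=
  stmt_16_general m hm3 F hF δ
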